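/- arXiv:1802.08889 — 3 statements merged into one kernel-verified Lean document; each statement's English description precedes it below -/
import Mathlib

section
/- In a Polish space X, a subset E is resolvable if and only if E is a Δ⁰₂ set (i.e., both E and its complement are Fσ, equivalently E is simultaneously Fσ and Gδ). -/
/-!
Baire category gives one direction: on a nonempty closed `F`, a set that is both `Gδ` and
`Fσ` cannot have `F ∩ E` and `F \ E` both dense in `F`, since two disjoint dense `Gδ` subsets of
the Polish space `F` would meet.

For the converse, let `W` be the union of the basic open sets `B` on which `E` is `Δ⁰₂`, i.e.
`B ∩ E` and `B \ E` are `Fσ`. Countably many basic sets suffice, so `E` is `Δ⁰₂` on `W`. If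
`F = Wᶜ` were nonempty, resolvability would give a point `x ∈ F` and a basic neighbourhood `B`
of `x` with `B ∩ F` inside `E` or inside `Eᶜ`; since open sets are `Fσ`, `E`
is then `Δ⁰₂` on `B` as well, so `x ∈ W`.
-/

def Resolvable {X : Type*} [TopologicalSpace X] (E : Set X) : Prop :=
  ∀ F : Set X, IsClosed F → F.Nonempty →
    closure (F ∩ E) ∩ closure (F \ E) ≠ F

/-- `E` is an Fσ set: a countable union of closed sets. -/
def IsFSigma {X : Type*} [TopologicalSpace X] (E : Set X) : Prop :=
  ∃ f : ℕ → Set X, (∀ n, IsClosed (f n)) ∧ E = ⋃ n, f n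

open Set TopologicalSpace

section FSigma

variable {X : Type*} [TopologicalSpace X] {s t : Set X}

theorem isFSigma_iff_isGδ_compl : IsFSigma s ↔ IsGδ sᶜ := by
  rw [isGδ_iff_eq_iInter_nat]
  constructor
  · rintro ⟨f, hf, rfl⟩
    exact ⟨fun n => (f n)ᶜ, fun n => (hf n).isOpen_compl, compl_iUnion f⟩
  · rintro ⟨f, hf, hs⟩
    refine ⟨fun n => (f n)ᶜ, fun n => (hf n).isClosed_compl, ?_⟩
    rw [← compl_iInter, ← hs, compl_compl]

theorem isGδ_iff_isFSigma_compl : IsGδ s ↔ IsFSigma sᶜ := by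
  rw [isFSigma_iff_isGδ_compl, compl_compl]

theorem IsClosed.isFSigma (hs : IsClosed s) : IsFSigma s :=
  ⟨fun _ => s, fun _ => hs, (iUnion_const s).symm⟩

theorem IsOpen.isFSigma [PerfectlyNormalSpace X] (hs : IsOpen s) : IsFSigma s :=
  isFSigma_iff_isGδ_compl.2 hs.isClosed_compl.isGδ

theorem IsFSigma.union (hs : IsFSigma s) (ht : IsFSigma t) : IsFSigma (s ∪ t) := by
  rw [isFSigma_iff_isGδ_compl, compl_union] at *
  exact hs.inter ht

theorem IsFSigma.inter (hs : IsFSigma s) (ht : IsFSigma t) : IsFSigma (s ∩ t) := by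
  rw [isFSigma_iff_isGδ_compl, compl_inter] at *
  exact hs.union ht

theorem IsFSigma.biUnion {ι : Type*} {I : Set ι} (hI : I.Countable) {f : ι → Set X}
    (hf : ∀ i ∈ I, IsFSigma (f i)) : IsFSigma (⋃ i ∈ I, f i) := by
  rw [isFSigma_iff_isGδ_compl, compl_iUnion₂]
  exact .biInter hI fun i hi => isFSigma_iff_isGδ_compl.1 (hf i hi)

end FSigma

section Delta02On

variable {X : Type*} [TopologicalSpace X] {E A B : Set X}

def IsDelta02On (E A : Set X) : Prop :=
  IsFSigma (A ∩ E) ∧ IsFSigma (A ∩ Eᶜ)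

theorem isDelta02On_compl : IsDelta02On Eᶜ A ↔ IsDelta02On E A := by
  rw [IsDelta02On, IsDelta02On, compl_compl, and_comm]

theorem isDelta02On_univ_iff : IsDelta02On E univ ↔ IsFSigma E ∧ IsGδ E := by
  rw [IsDelta02On, univ_inter, univ_inter, isGδ_iff_isFSigma_compl]

theorem IsDelta02On.sUnion {𝒰 : Set (Set X)} (h𝒰 : 𝒰.Countable)
    (h : ∀ A ∈ 𝒰, IsDelta02On E A) : IsDelta02On E (⋃₀ 𝒰) := by
  simp only [IsDelta02On, sUnion_eq_biUnion, iUnion₂_inter]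
  exact ⟨.biUnion h𝒰 fun A hA => (h A hA).1, .biUnion h𝒰 fun A hA => (h A hA).2⟩

theorem IsDelta02On.of_diff_subset_compl [PerfectlyNormalSpace X] (h : IsDelta02On E A)
    (hB : IsOpen B) (hA : IsOpen A) (hBA : B \ A ⊆ Eᶜ) : IsDelta02On E B := by
  have hBE : B ∩ E = B ∩ (A ∩ E) := by
    ext x
    constructor
    · rintro ⟨hxB, hxE⟩
      by_contra hxA
      exact hBA ⟨hxB, fun h => hxA ⟨hxB, h, hxE⟩⟩ hxE
    · rintro ⟨hxB, -, hxE⟩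
      exact ⟨hxB, hxE⟩
  have hBEc : B ∩ Eᶜ = B ∩ (A ∩ Eᶜ) ∪ B \ A := by
    ext x
    constructor
    · rintro ⟨hxB, hxE⟩
      by_cases hxA : x ∈ A
      exacts [Or.inl ⟨hxB, hxA, hxE⟩, Or.inr ⟨hxB, hxA⟩]
    · rintro (⟨hxB, -, hxE⟩ | hx)
      exacts [⟨hxB, hxE⟩, ⟨hx.1, hBA hx⟩]
  refine ⟨hBE ▸ hB.isFSigma.inter h.1, hBEc ▸ (hB.isFSigma.inter h.2).union ?_⟩
  exact hB.isFSigma.inter hA.isClosed_compl.isFSigma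

end Delta02On

section Resolvable

variable {X : Type*} [TopologicalSpace X] {E : Set X}

theorem IsGδ.not_dense_compl [BaireSpace X] [Nonempty X] (hE : IsGδ E) (hEc : IsGδ Eᶜ)
    (hd : Dense E) : ¬Dense Eᶜ := fun hdc => by
  simpa using (hd.inter_of_Gδ hE hEc hdc).nonempty

theorem IsGδ.resolvable [PolishSpace X] (hE : IsGδ E) (hEc : IsGδ Eᶜ) : Resolvable E := by
  intro F hF hFne hEF
  have := hF.polishSpace
  have := hFne.to_subtype
  have hd : Dense ((↑) ⁻¹' E : Set F) := by
    rw [Subtype.dense_iff, Subtype.image_preimage_coe]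
    exact hEF.symm.subset.trans inter_subset_left
  have hdc : Dense ((↑) ⁻¹' E : Set F)ᶜ := by
    rw [Subtype.dense_iff, ← preimage_compl, Subtype.image_preimage_coe]
    exact hEF.symm.subset.trans inter_subset_right
  exact (hE.preimage continuous_subtype_val).not_dense_compl
    (hEc.preimage continuous_subtype_val) hd hdc

variable [SecondCountableTopology X]

theorem IsDelta02On.exists_mem_countableBasis [PerfectlyNormalSpace X] {W : Set X} {x : X}
    (h : IsDelta02On E W) (hW : IsOpen W) (hx : x ∉ closure (Wᶜ ∩ E)) :
    ∃ B ∈ countableBasis X, x ∈ B ∧ IsDelta02On E B := by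
  obtain ⟨B, hB, hxB, hBsub⟩ := (isBasis_countableBasis X).exists_subset_of_mem_open
    hx isClosed_closure.isOpen_compl
  refine ⟨B, hB, hxB, h.of_diff_subset_compl (isOpen_of_mem_countableBasis hB) hW ?_⟩
  exact fun y ⟨hyB, hyW⟩ hyE => hBsub hyB (subset_closure ⟨hyW, hyE⟩)

theorem Resolvable.isDelta02On_univ [PerfectlyNormalSpace X] (hE : Resolvable E) :
    IsDelta02On E univ := by
  set W := ⋃₀ {B ∈ countableBasis X | IsDelta02On E B}
  have hW : IsDelta02On E W :=
    .sUnion ((countable_countableBasis X).mono fun _ hB => hB.1) fun _ hB => hB.2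
  have hWo : IsOpen W := isOpen_sUnion fun _ hB => isOpen_of_mem_countableBasis hB.1
  suffices W = univ from this ▸ hW
  by_contra hWne
  have hF : IsClosed Wᶜ := hWo.isClosed_compl
  have hsub : closure (Wᶜ ∩ E) ∩ closure (Wᶜ \ E) ⊆ Wᶜ :=
    inter_subset_left.trans (closure_minimal inter_subset_left hF)
  obtain ⟨x, hxF, hx⟩ := not_subset.1 fun h =>
    hE Wᶜ hF (nonempty_compl.2 hWne) (hsub.antisymm h)
  have hxB : ∃ B ∈ countableBasis X, x ∈ B ∧ IsDelta02On E B := by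
    rcases not_and_or.1 hx with hxE | hxEc
    · exact hW.exists_mem_countableBasis hWo hxE
    · obtain ⟨B, hB, hxB, hBE⟩ :=
        (isDelta02On_compl.2 hW).exists_mem_countableBasis hWo hxEc
      exact ⟨B, hB, hxB, isDelta02On_compl.1 hBE⟩
  obtain ⟨B, hB, hxB, hBE⟩ := hxB
  exact hxF (mem_sUnion_of_mem hxB ⟨hB, hBE⟩)

end Resolvable

theorem resolvable_iff_delta02 {X : Type*} [TopologicalSpace X] [PolishSpace X]
    (E : Set X) : Resolvable E ↔ (IsFSigma E ∧ IsGδ E) := by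
  refine ⟨fun hE => isDelta02On_univ_iff.1 hE.isDelta02On_univ, fun ⟨hσ, hδ⟩ => ?_⟩
  exact hδ.resolvable (isFSigma_iff_isGδ_compl.1 hσ)
end

section
/- Every finite union of locally closed sets (an LC_n set) in a metric space is resolvable. -/
lemma resolvable_empty {X : Type*} [TopologicalSpace X] : Resolvable (∅ : Set X) := by
  intro F _ hne h
  rw [Set.inter_empty, closure_empty, Set.empty_inter] at h
  exact hne.ne_empty h.symm

lemma resolvable_locallyClosed {X : Type*} [TopologicalSpace X] {U C : Set X}
    (hU : IsOpen U) (hC : IsClosed C) : Resolvable (U ∩ C) := by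
  intro F hF hne h
  -- F ⊆ closure (F ∩ (U ∩ C)) ⊆ C
  have hFC : F ⊆ C := by
    intro x hx
    rw [← h] at hx
    have : x ∈ closure (F ∩ (U ∩ C)) := hx.1
    have : x ∈ closure C := closure_mono (by intro y hy; exact hy.2.2) this
    rwa [hC.closure_eq] at this
  have h1 : F ⊆ closure (F ∩ (U ∩ C)) := fun x hx => by rw [← h] at hx; exact hx.1
  have h2 : F ⊆ closure (F \ (U ∩ C)) := fun x hx => by rw [← h] at hx; exact hx.2
  -- pick a point of F ∩ U
  obtain ⟨x, hxF⟩ := hne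
  have hxc : x ∈ closure (F ∩ (U ∩ C)) := h1 hxF
  obtain ⟨y, hy⟩ := (mem_closure_iff.mp hxc) Set.univ isOpen_univ (Set.mem_univ x)
  have hyF : y ∈ F := hy.2.1
  have hyU : y ∈ U := hy.2.2.1
  -- y ∈ closure (F \ (U ∩ C)); use U as neighborhood
  have hyc : y ∈ closure (F \ (U ∩ C)) := h2 hyF
  obtain ⟨z, hz⟩ := (mem_closure_iff.mp hyc) U hU hyU
  exact hz.2.2 ⟨hz.1, hFC hz.2.1⟩

lemma resolvable_union {X : Type*} [TopologicalSpace X] {A B : Set X}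
    (hA : Resolvable A) (hB : Resolvable B) : Resolvable (A ∪ B) := by
  intro F hF hne h
  have h1 : F ⊆ closure (F ∩ (A ∪ B)) := fun x hx => by rw [← h] at hx; exact hx.1
  have h2 : F ⊆ closure (F \ (A ∪ B)) := fun x hx => by rw [← h] at hx; exact hx.2
  have hAF := hA F hF hne
  -- closure (F ∩ A) ∩ closure (F \ A) ⊆ F
  have hsub : closure (F ∩ A) ∩ closure (F \ A) ⊆ F := by
    intro x hx
    have : x ∈ closure F := closure_mono Set.inter_subset_left hx.1
    rwa [hF.closure_eq] at this
  obtain ⟨x, hxF, hxn⟩ : ∃ x ∈ F, x ∉ closure (F ∩ A) ∩ closure (F \ A) := by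
    by_contra hc
    push_neg at hc
    exact hAF (Set.Subset.antisymm hsub hc)
  rw [Set.mem_inter_iff, not_and_or] at hxn
  rcases hxn with hxn | hxn
  · -- x has an open nbhd V with V ∩ (F ∩ A) = ∅
    obtain ⟨V, hVx, hVo, hVA⟩ : ∃ V, x ∈ V ∧ IsOpen V ∧ ∀ y ∈ V, y ∉ F ∩ A := by
      rw [mem_closure_iff] at hxn
      push_neg at hxn
      obtain ⟨V, hVo, hVx, hV⟩ := hxn
      exact ⟨V, hVx, hVo, fun y hy hyFA => by
        exact Set.eq_empty_iff_forall_notMem.mp hV y ⟨hy, hyFA⟩⟩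
    set F' := closure (F ∩ V) with hF'
    have hF'c : IsClosed F' := isClosed_closure
    have hF'ne : F'.Nonempty := ⟨x, subset_closure ⟨hxF, hVx⟩⟩
    have hF'F : F' ⊆ F := by
      have := closure_mono (Set.inter_subset_left : F ∩ V ⊆ F)
      rw [hF.closure_eq] at this
      exact this
    -- density of F' ∩ B in F'
    have hd1 : F' ⊆ closure (F' ∩ B) := by
      intro y hy
      rw [mem_closure_iff]
      intro W hWo hWy
      obtain ⟨z, hzW, hzF, hzV⟩ := (mem_closure_iff.mp hy) W hWo hWy
      have hz2 : z ∈ closure (F ∩ (A ∪ B)) := h1 hzF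
      obtain ⟨w, hw⟩ := (mem_closure_iff.mp hz2) (W ∩ V) (hWo.inter hVo) ⟨hzW, hzV⟩
      obtain ⟨⟨hwW, hwV⟩, hwF, hwAB⟩ := hw
      have hwB : w ∈ B := by
        rcases hwAB with hwA | hwB
        · exact absurd ⟨hwF, hwA⟩ (hVA w hwV)
        · exact hwB
      exact ⟨w, hwW, subset_closure ⟨hwF, hwV⟩, hwB⟩
    have hd2 : F' ⊆ closure (F' \ B) := by
      intro y hy
      rw [mem_closure_iff]
      intro W hWo hWy
      obtain ⟨z, hzW, hzF, hzV⟩ := (mem_closure_iff.mp hy) W hWo hWy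
      have hz2 : z ∈ closure (F \ (A ∪ B)) := h2 hzF
      obtain ⟨w, hw⟩ := (mem_closure_iff.mp hz2) (W ∩ V) (hWo.inter hVo) ⟨hzW, hzV⟩
      obtain ⟨⟨hwW, hwV⟩, hwF, hwAB⟩ := hw
      exact ⟨w, hwW, ⟨subset_closure ⟨hwF, hwV⟩, fun hwB => hwAB (Or.inr hwB)⟩⟩
    refine hB F' hF'c hF'ne ?_
    refine Set.Subset.antisymm ?_ (fun y hy => ⟨hd1 hy, hd2 hy⟩)
    intro y hy
    have : y ∈ closure F' := closure_mono Set.inter_subset_left hy.1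
    rwa [hF'c.closure_eq] at this
  · -- x ∉ closure (F \ A): contradiction with h2 directly
    obtain ⟨V, hVx, hVo, hVA⟩ : ∃ V, x ∈ V ∧ IsOpen V ∧ ∀ y ∈ V, y ∉ F \ A := by
      rw [mem_closure_iff] at hxn
      push_neg at hxn
      obtain ⟨V, hVo, hVx, hV⟩ := hxn
      exact ⟨V, hVx, hVo, fun y hy hyFA => by
        exact Set.eq_empty_iff_forall_notMem.mp hV y ⟨hy, hyFA⟩⟩
    have hx2 : x ∈ closure (F \ (A ∪ B)) := h2 hxF
    obtain ⟨w, hwV, hwF, hwAB⟩ := (mem_closure_iff.mp hx2) V hVo hVx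
    exact hVA w hwV ⟨hwF, fun hwA => hwAB (Or.inl hwA)⟩

lemma resolvable_iUnion_fin {X : Type*} [TopologicalSpace X] :
    ∀ n (S : Fin n → Set X), (∀ i, Resolvable (S i)) → Resolvable (⋃ i, S i) := by
  intro n
  induction n with
  | zero =>
    intro S _
    have : (⋃ i : Fin 0, S i) = ∅ := by simp
    rw [this]; exact resolvable_empty
  | succ n ih =>
    intro S hS
    have : (⋃ i, S i) = S 0 ∪ ⋃ i : Fin n, S i.succ := by
      ext x; simp [Set.mem_iUnion, Fin.exists_fin_succ]
    rw [this]
    exact resolvable_union (hS 0) (ih (fun i => S i.succ) (fun i => hS i.succ))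

theorem finite_union_locallyClosed_resolvable {X : Type*} [MetricSpace X]
    (n : ℕ) (U C : Fin n → Set X)
    (hU : ∀ i, IsOpen (U i)) (hC : ∀ i, IsClosed (C i)) :
    Resolvable (⋃ i, U i ∩ C i) :=
  resolvable_iUnion_fin n (fun i => U i ∩ C i)
    (fun i => resolvable_locallyClosed (hU i) (hC i))
end

section
/- Every continuous open-LC₁ function from a topological space onto a metrizable crowded (perfect, i.e., without isolated points) space is an open map. -/
def IsLC {X : Type*} [TopologicalSpace X] (E : Set X) : Prop :=
  ∃ U F : Set X, IsOpen U ∧ IsClosed F ∧ E = U ∩ F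

/-!
If `f '' U` is not a neighbourhood of some `y ∈ f '' U`, choose `z n ∉ f '' U` with `z n → y`
and put `K = insert y (range z)`: a closed set in which every `z n` is isolated. Surjectivity
gives `f '' (U ∪ f ⁻¹' Kᶜ) = f '' U ∪ Kᶜ =: s`, which must be locally closed, so `closure s \ s`
is closed. Since `Y` has no isolated points, every `z n` lies in `closure Kᶜ ⊆ closure s` but
not in `s`; hence the limit `y` lies in `closure s \ s` too, contradicting `y ∈ s`.
-/

open Set Filter Topology

theorem isLC_iff_isLocallyClosed {X : Type*} [TopologicalSpace X] {E : Set X} :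
    IsLC E ↔ IsLocallyClosed E :=
  Iff.rfl

section

variable {Y : Type*} [TopologicalSpace Y]

theorem IsLocallyClosed.closure_disjoint_of_subset_closure_diff {s t : Set Y}
    (hs : IsLocallyClosed s) (ht : t ⊆ closure s \ s) : Disjoint (closure t) s := by
  have hclosed : IsClosed (closure s \ s) :=
    isOpen_compl_iff.1 (isLocallyClosed_iff_isOpen_coborder.1 hs)
  exact disjoint_sdiff_left.mono_left (closure_minimal ht hclosed)

theorem Filter.Tendsto.compl_insert_range_mem_nhdsNE [T2Space Y] {z : ℕ → Y} {y : Y}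
    (hz : Tendsto z atTop (𝓝 y)) {n : ℕ} (hne : z n ≠ y) :
    (insert y (range z))ᶜ ∈ 𝓝[≠] z n := by
  obtain ⟨U, hU, V, hV, hUV⟩ := Filter.disjoint_iff.1 (disjoint_nhds_nhds.2 hne)
  obtain ⟨M, hM⟩ := eventually_atTop.1 (hz.eventually_mem hV)
  have hfin : (z '' Iio M \ {z n})ᶜ ∈ 𝓝 (z n) :=
    ((finite_Iio M).image z |>.sdiff).isClosed.isOpen_compl.mem_nhds (by simp)
  filter_upwards [nhdsWithin_le_nhds (inter_mem hU hfin), self_mem_nhdsWithin]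
    with w ⟨hwU, hwfin⟩ hwne
  rintro (rfl | ⟨m, rfl⟩)
  · exact hUV.ne_of_mem hwU (mem_of_mem_nhds hV) rfl
  · rcases lt_or_ge m M with hm | hm
    · exact hwfin ⟨mem_image_of_mem z hm, hwne⟩
    · exact hUV.ne_of_mem hwU (hM m hm) rfl

theorem not_isLocallyClosed_union_compl [∀ x : Y, NeBot (𝓝[≠] x)] {E K t : Set Y} {y : Y}
    (hy : y ∈ E) (htK : t ⊆ K) (htE : Disjoint t E) (hyt : y ∈ closure t)
    (hiso : ∀ z ∈ t, Kᶜ ∈ 𝓝[≠] z) : ¬ IsLocallyClosed (E ∪ Kᶜ) := by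
  intro hs
  have ht : t ⊆ closure (E ∪ Kᶜ) \ (E ∪ Kᶜ) := by
    intro z hz
    have hzK : z ∈ closure Kᶜ :=
      mem_closure_iff_nhdsWithin_neBot.2 (neBot_of_le (nhdsWithin_le_of_mem (hiso z hz)))
    exact ⟨closure_mono subset_union_right hzK,
      not_or.2 ⟨htE.notMem_of_mem_left hz, not_not.2 (htK hz)⟩⟩
  exact (hs.closure_disjoint_of_subset_closure_diff ht).notMem_of_mem_left hyt (Or.inl hy)

end

/-- Every continuous open-LC₁ function onto a metrizable crowded space is open. -/
theorem openLC1_is_open {X Y : Type*} [TopologicalSpace X] [MetricSpace Y]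
    (f : X → Y) (hf : Continuous f) (hsurj : Function.Surjective f)
    (hcrowded : ∀ y : Y, ¬ IsOpen ({y} : Set Y))
    (hLC : ∀ U : Set X, IsOpen U → IsLC (f '' U)) :
    IsOpenMap f := by
  have : ∀ y : Y, NeBot (𝓝[≠] y) := fun y =>
    neBot_iff.2 fun h => hcrowded y ((isOpen_singleton_iff_punctured_nhds y).2 h)
  intro U hU
  refine isOpen_iff_mem_nhds.2 fun y hy => by_contra fun hnhds => ?_
  obtain ⟨z, hzE, hz⟩ : ∃ z : ℕ → Y, (∀ n, z n ∈ (f '' U)ᶜ) ∧ Tendsto z atTop (𝓝 y) :=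
    mem_closure_iff_seq_limit.1 <| by
      rwa [closure_compl, mem_compl_iff, mem_interior_iff_mem_nhds]
  have hK : IsClosed (insert y (range z)) := hz.isCompact_insert_range.isClosed
  have hLCimage := isLC_iff_isLocallyClosed.1 (hLC _ (hU.union (hK.isOpen_compl.preimage hf)))
  rw [image_union, image_preimage_eq _ hsurj] at hLCimage
  refine not_isLocallyClosed_union_compl hy (subset_insert _ _) ?_
    (mem_closure_of_tendsto hz (Eventually.of_forall mem_range_self)) ?_ hLCimage
  · exact disjoint_left.2 fun _ ⟨n, hn⟩ => hn ▸ hzE n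
  · rintro _ ⟨n, rfl⟩
    exact hz.compl_insert_range_mem_nhdsNE fun h => hzE n (h ▸ hy)
end
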